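/- For τ ∈ (0, 1/4), let a₁(τ) < b₁(τ) denote the two real roots of q₁. Then the function τ ↦ a₁(τ) is strictly decreasing on (0, 1/4) and the function τ ↦ b₁(τ) is strictly increasing on (0, 1/4); moreover a₁(τ) → 3^{2/3}/4 and b₁(τ) → 3^{2/3}/4 as τ → 0⁺, while a₁(τ) → −∞ and b₁(τ) → 3^{2/3}/2 as τ → 1/4⁻. -/
import Mathlib


noncomputable section

/-- The constant `c = −(243(1−4τ)²/64)^{1/3}` (real cube root). -/
def ccf (τ : ℝ) : ℝ := -(243 * (1 - 4 * τ) ^ 2 / 64) ^ ((1 : ℝ) / 3)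

/-- `R(z) = 3z⁴ − 3z − c`. -/
def RR (τ : ℝ) (z : ℂ) : ℂ := 3 * z ^ 4 - 3 * z - (ccf τ : ℂ)

/-- `D(z) = −2z⁶ + 3z³ + cz² − 3τ`. -/
def DD (τ : ℝ) (z : ℂ) : ℂ :=
  -2 * z ^ 6 + 3 * z ^ 3 + (ccf τ : ℂ) * z ^ 2 - 3 * (τ : ℂ)

/-- The quartic `q₁`. -/
def q1 (τ : ℝ) (z : ℂ) : ℂ :=
  ((256 / (3 : ℝ) ^ ((5 : ℝ) / 3) * (1 - 4 * τ) ^ ((1 : ℝ) / 3) : ℝ) : ℂ) * z ^ 4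
    + (128 / 9 : ℂ) * z ^ 3
    + ((16 / (3 : ℝ) ^ ((1 : ℝ) / 3) * (1 - 4 * τ) ^ ((2 : ℝ) / 3) : ℝ) : ℂ) * z ^ 2
    - ((32 * (3 : ℝ) ^ ((1 : ℝ) / 3) * (1 - 4 * τ) ^ ((1 : ℝ) / 3) : ℝ) : ℂ) * z
    + ((16 * (1 - 8 * τ) : ℝ) : ℂ)

/-- The linear factor `q₂`. -/
def q2 (τ : ℝ) (z : ℂ) : ℂ :=
  (((3 : ℝ) ^ ((1 : ℝ) / 3) * (1 - 4 * τ) ^ ((1 : ℝ) / 3) : ℝ) : ℂ) * z - 1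

/-- The double point `b_* = (3(1−4τ))^{−1/3}`. -/
def bstar (τ : ℝ) : ℝ := (3 * (1 - 4 * τ)) ^ (-(1 : ℝ) / 3)

namespace BA

/-- The normalized real quartic: `q1 τ x = (16/9) * gg (vv τ) x`. -/
def gg (v x : ℝ) : ℝ := 16*v*x^4 + 8*x^3 + 3*v^2*x^2 - 18*v*x + 6*v^3 - 9

/-- The parameter `v = (3(1−4τ))^{1/3}`. -/
def vv (τ : ℝ) : ℝ := (3 * (1 - 4 * τ)) ^ ((1:ℝ)/3)

lemma vv_pos {τ : ℝ} (h : τ < 1/4) : 0 < vv τ :=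
  Real.rpow_pos_of_pos (by linarith) _

lemma s_cube : ((3:ℝ)^((1:ℝ)/3))^3 = 3 := by
  rw [← Real.rpow_natCast ((3:ℝ) ^ ((1:ℝ)/3)) 3, ← Real.rpow_mul (by norm_num)]
  norm_num

lemma s_pos : 0 < (3:ℝ)^((1:ℝ)/3) := Real.rpow_pos_of_pos (by norm_num) _

lemma s_gt_one : 1 < (3:ℝ)^((1:ℝ)/3) := by
  by_contra h
  push_neg at h
  have := pow_le_one₀ (le_of_lt s_pos) h (n := 3)
  rw [s_cube] at this; norm_num at this

lemma beta_pos : 0 < (3:ℝ)^((2:ℝ)/3)/2 := by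
  have := Real.rpow_pos_of_pos (show (0:ℝ) < 3 by norm_num) ((2:ℝ)/3)
  linarith

lemma beta_cube : 8 * ((3:ℝ)^((2:ℝ)/3)/2)^3 = 9 := by
  have h : ((3:ℝ)^((2:ℝ)/3))^3 = 9 := by
    rw [← Real.rpow_natCast ((3:ℝ) ^ ((2:ℝ)/3)) 3, ← Real.rpow_mul (by norm_num)]
    norm_num [Real.rpow_two]
  nlinarith [h]

lemma vv_lt_s {τ : ℝ} (h : 0 < τ) (h' : τ < 1/4) : vv τ < (3:ℝ)^((1:ℝ)/3) :=
  Real.rpow_lt_rpow (by nlinarith) (by nlinarith) (by norm_num)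

lemma roots_cube_lt {v x : ℝ} (hv : 0 < v) (h : gg v x = 0) : 8*x^3 < 9 := by
  by_contra h9
  push_neg at h9
  have hx : 0 < x := by
    by_contra hx0
    push_neg at hx0
    have := Odd.pow_nonpos (⟨1, by norm_num⟩ : Odd 3) hx0
    linarith
  have h1 : 0 ≤ x * (8*x^3 - 9) * v :=
    mul_nonneg (mul_nonneg hx.le (by linarith)) hv.le
  have h2 : 0 < v^3 := pow_pos hv 3
  have h3 : 0 ≤ x^2 * v^2 := mul_nonneg (sq_nonneg x) (sq_nonneg v)
  simp only [gg] at h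
  nlinarith [h1, h2, h3]

lemma sign_lt {v v' x : ℝ} (hv' : 0 < v') (hvv : v' < v) (h : gg v x = 0) :
    gg v' x < 0 := by
  have hv : 0 < v := lt_trans hv' hvv
  have h9 : 8*x^3 < 9 := roots_cube_lt hv h
  simp only [gg] at h ⊢
  have key : v * (16*v'*x^4 + 8*x^3 + 3*v'^2*x^2 - 18*v'*x + 6*v'^3 - 9)
      = (v' - v) * (6*v*v'^2 + (6*v^2 + 3*x^2*v)*v' + (9 - 8*x^3)) := by
    linear_combination v' * h
  have hB : 0 < 6*v*v'^2 + (6*v^2 + 3*x^2*v)*v' + (9 - 8*x^3) := by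
    nlinarith [mul_pos hv (mul_pos hv' hv'), mul_pos (mul_pos hv hv) hv',
      mul_nonneg (mul_nonneg (sq_nonneg x) hv.le) hv'.le]
  nlinarith [key, mul_neg_of_neg_of_pos (show v' - v < 0 by linarith) hB]

lemma gg_cont (v : ℝ) : Continuous (gg v) := by
  unfold gg; fun_prop

lemma gg_pos_at {v K : ℝ} (hv : 0 < v) (hK2 : 2 ≤ K) (hvK : 1 ≤ v*K) :
    0 < gg v K ∧ 0 < gg v (-K) := by
  have hKp : (0:ℝ) < K := by linarith
  have hK3 : (8:ℝ) ≤ K^3 := by nlinarith [sq_nonneg (K-2), sq_nonneg K]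
  constructor
  · have e2 : (110:ℝ) ≤ v*K*(16*K^3 - 18) := by nlinarith
    simp only [gg]
    nlinarith [mul_pos hv hKp, pow_pos hKp 3, mul_nonneg (sq_nonneg v) (sq_nonneg K),
      pow_pos hv 3]
  · have e1 : 16*(v*K)*K^3 ≥ 16*K^3 := by nlinarith
    simp only [gg]
    nlinarith [mul_pos hv hKp, mul_nonneg (sq_nonneg v) (sq_nonneg K), pow_pos hv 3]

lemma Kfacts {v y : ℝ} (hv : 0 < v) :
    ∃ K : ℝ, 2 ≤ K ∧ 1 ≤ v*K ∧ -K < y ∧ y < K := by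
  refine ⟨max (max 2 (1/v)) (|y|+1), le_trans (le_max_left _ _) (le_max_left _ _), ?_, ?_, ?_⟩
  · have hKv : 1/v ≤ max (max 2 (1/v)) (|y|+1) :=
      le_trans (le_max_right _ _) (le_max_left _ _)
    rw [div_le_iff₀ hv] at hKv
    linarith [hKv]
  · have h1 : |y|+1 ≤ max (max 2 (1/v)) (|y|+1) := le_max_right _ _
    have h2 := neg_abs_le y
    linarith
  · have h1 : |y|+1 ≤ max (max 2 (1/v)) (|y|+1) := le_max_right _ _
    have h2 := le_abs_self y
    linarith

lemma exists_root_lt {v y : ℝ} (hv : 0 < v) (hy : gg v y < 0) :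
    ∃ r, r < y ∧ gg v r = 0 := by
  obtain ⟨K, hK2, hvK, hKy1, hKy2⟩ := Kfacts (y := y) hv
  obtain ⟨-, hneg⟩ := gg_pos_at hv hK2 hvK
  have hsub := intermediate_value_Ioo' (le_of_lt hKy1) ((gg_cont v).continuousOn)
  obtain ⟨r, hr, hr0⟩ := hsub (⟨hy, hneg⟩ : (0:ℝ) ∈ Set.Ioo (gg v y) (gg v (-K)))
  exact ⟨r, hr.2, hr0⟩

lemma exists_root_gt {v y : ℝ} (hv : 0 < v) (hy : gg v y < 0) :
    ∃ r, y < r ∧ gg v r = 0 := by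
  obtain ⟨K, hK2, hvK, hKy1, hKy2⟩ := Kfacts (y := y) hv
  obtain ⟨hpos, -⟩ := gg_pos_at hv hK2 hvK
  have hsub := intermediate_value_Ioo (le_of_lt hKy2) ((gg_cont v).continuousOn)
  obtain ⟨r, hr, hr0⟩ := hsub (⟨hy, hpos⟩ : (0:ℝ) ∈ Set.Ioo (gg v y) (gg v K))
  exact ⟨r, hr.1, hr0⟩

set_option maxHeartbeats 1000000 in
lemma near_bound {v x : ℝ} (h1 : 1 ≤ v) (h2 : v ≤ (3:ℝ)^((1:ℝ)/3))
    (h : gg v x = 0) :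
    (x - (3:ℝ)^((2:ℝ)/3)/4)^2 ≤ 38*((3:ℝ)^((1:ℝ)/3) - v) := by
  set s := (3:ℝ)^((1:ℝ)/3) with hs
  set z0 := (3:ℝ)^((2:ℝ)/3)/4 with hz0
  have hs3 : s^3 = 3 := s_cube
  have hsp : (0:ℝ) < s := s_pos
  have hs15 : s < 3/2 := by nlinarith [sq_nonneg (s - 3/2), sq_nonneg (s+2)]
  have hz : 4*s*z0 = 3 := by
    have h' : s * ((3:ℝ)^((2:ℝ)/3)) = 3 := by
      rw [hs, ← Real.rpow_add (by norm_num)]; norm_num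
    rw [hz0]; linarith
  have hv0 : (0:ℝ) < v := by linarith
  have hxu : x ≤ 2 := by
    by_contra hc
    push_neg at hc
    have hx2 : 4 ≤ x^2 := by nlinarith
    have hx4 : 16 ≤ x^4 := by nlinarith [sq_nonneg (x^2 - 4)]
    simp only [gg] at h
    nlinarith [mul_le_mul_of_nonneg_left hx4 (by linarith : (0:ℝ) ≤ v),
      mul_nonneg (sq_nonneg v) (sq_nonneg x), pow_pos hv0 3,
      mul_pos hv0 (by linarith : (0:ℝ) < x)]
  have hxl : -2 ≤ x := by
    by_contra hc
    push_neg at hc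
    have hx2 : 4 ≤ x^2 := by nlinarith
    have hx4 : 16 ≤ x^4 := by nlinarith [sq_nonneg (x^2 - 4)]
    have hx3 : x^3 ≤ -2*x^2 := by nlinarith
    simp only [gg] at h
    nlinarith [mul_le_mul_of_nonneg_left hx4 (by linarith : (0:ℝ) ≤ v),
      mul_nonneg (sq_nonneg v) (sq_nonneg x), pow_pos hv0 3,
      mul_pos hv0 (by linarith : (0:ℝ) < -x), hx2]
  have hx2' : x^2 ≤ 4 := by nlinarith
  have hx4' : x^4 ≤ 16 := by nlinarith [sq_nonneg x, sq_nonneg (x^2-4), sq_nonneg (x^2+4)]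
  have hx4p : 0 ≤ x^4 := by positivity
  have hEl : 0 ≤ 16*x^4 + 3*(s+v)*x^2 - 18*x + 6*(s^2 + s*v + v^2) := by
    nlinarith [sq_nonneg x, sq_nonneg (x-1), sq_nonneg (2*x^2-1), sq_nonneg (x+1),
      sq_nonneg (s-v), mul_nonneg (sq_nonneg x) (by linarith : (0:ℝ) ≤ s+v-2), hx4p]
  have hEu : 16*x^4 + 3*(s+v)*x^2 - 18*x + 6*(s^2 + s*v + v^2) ≤ 400 := by
    nlinarith [hx2', hx4', sq_nonneg (s-v)]
  have hid : gg s x = (s - v) * (16*x^4 + 3*(s+v)*x^2 - 18*x + 6*(s^2 + s*v + v^2)) := by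
    simp only [gg] at h ⊢
    linear_combination h
  have hkey : (4*s*x - 3)^2 * ((s*x+1)^2 + 2)
      = 3*(s-v)*(16*x^4 + 3*(s+v)*x^2 - 18*x + 6*(s^2 + s*v + v^2)) := by
    simp only [gg] at hid
    linear_combination 3 * hid - (18 - 8*x^3 - 16*s*x^4) * hs3
  have hsv : 0 ≤ s - v := by linarith
  have hQ2 : 2 ≤ (s*x+1)^2 + 2 := by nlinarith [sq_nonneg (s*x+1)]
  have h38 : (4*s*x - 3)^2 * 2 ≤ 1200*(s-v) := by
    have hup : 3*(s-v)*(16*x^4 + 3*(s+v)*x^2 - 18*x + 6*(s^2 + s*v + v^2))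
        ≤ 1200*(s-v) := by
      nlinarith [mul_le_mul_of_nonneg_left hEu (by linarith : (0:ℝ) ≤ 3*(s-v))]
    have hlow : (4*s*x - 3)^2 * 2 ≤ (4*s*x - 3)^2 * ((s*x+1)^2 + 2) :=
      mul_le_mul_of_nonneg_left hQ2 (sq_nonneg _)
    linarith [hkey ▸ hlow, hup]
  have hfac : 4*s*x - 3 = 4*s*(x - z0) := by linarith [hz]
  rw [hfac] at h38
  nlinarith [sq_nonneg (x - z0), h38, hsv,
    mul_le_mul_of_nonneg_right (by nlinarith : (32:ℝ) ≤ 32*s^2) (sq_nonneg (x - z0))]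

lemma boundary {x : ℝ} (h : gg ((3:ℝ)^((1:ℝ)/3)) x = 0) :
    x = (3:ℝ)^((2:ℝ)/3)/4 := by
  set s := (3:ℝ)^((1:ℝ)/3) with hs
  have hs3 : s^3 = 3 := s_cube
  have hsp : 0 < s := s_pos
  have key : (4*s*x - 3)^2 * ((s*x+1)^2 + 2) = 0 := by
    simp only [gg] at h
    linear_combination 3 * h - (18 - 8*x^3 - 16*s*x^4) * hs3
  have h2 : (0:ℝ) < (s*x+1)^2 + 2 := by positivity
  have h4 : 4*s*x - 3 = 0 := by
    rcases mul_eq_zero.mp key with hk | hk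
    · exact pow_eq_zero_iff (by norm_num) |>.mp hk
    · linarith
  have hz : s * ((3:ℝ)^((2:ℝ)/3)) = 3 := by
    rw [hs, ← Real.rpow_add (by norm_num)]; norm_num
  nlinarith [h4, hz, hsp, mul_pos hsp hsp]

lemma q1_eq (τ x : ℝ) (hτ : τ ≤ 1/4) :
    q1 τ (x : ℂ) = (((16/9) * gg (vv τ) x : ℝ) : ℂ) := by
  have hb : (0:ℝ) ≤ 1 - 4*τ := by linarith
  have key : 256 / (3:ℝ)^((5:ℝ)/3) * (1-4*τ)^((1:ℝ)/3) * x^4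
      + 128/9 * x^3
      + 16 / (3:ℝ)^((1:ℝ)/3) * (1-4*τ)^((2:ℝ)/3) * x^2
      - 32 * (3:ℝ)^((1:ℝ)/3) * (1-4*τ)^((1:ℝ)/3) * x
      + 16 * (1 - 8*τ)
      = 16/9 * gg (vv τ) x := by
    set u := (1-4*τ)^((1:ℝ)/3) with hu
    set t := (3:ℝ)^((1:ℝ)/3) with ht
    have htp : 0 < t := Real.rpow_pos_of_pos (by norm_num) _
    have ht3 : t^3 = 3 := by
      rw [ht, ← Real.rpow_natCast ((3:ℝ) ^ ((1:ℝ)/3)) 3, ← Real.rpow_mul (by norm_num)]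
      norm_num
    have hu3 : u^3 = 1 - 4*τ := by
      rw [hu, ← Real.rpow_natCast ((1-4*τ) ^ ((1:ℝ)/3)) 3, ← Real.rpow_mul hb]
      norm_num
    have hvv : vv τ = t * u := by
      rw [vv, Real.mul_rpow (by norm_num) hb]
    have h23 : (1-4*τ)^((2:ℝ)/3) = u^2 := by
      rw [hu, ← Real.rpow_natCast ((1-4*τ) ^ ((1:ℝ)/3)) 2, ← Real.rpow_mul hb]
      norm_num
    have h5p : (0:ℝ) < (3:ℝ)^((5:ℝ)/3) := Real.rpow_pos_of_pos (by norm_num) _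
    have hts : t * (3:ℝ)^((5:ℝ)/3) = 9 := by
      rw [ht, ← Real.rpow_add (by norm_num)]
      norm_num
    have h53 : 256 / (3:ℝ)^((5:ℝ)/3) = 256 * t / 9 := by
      rw [div_eq_div_iff (ne_of_gt h5p) (by norm_num)]
      nlinarith [hts]
    have h13 : 16 / t = 16 * t^2 / 3 := by
      rw [div_eq_div_iff (ne_of_gt htp) (by norm_num)]
      nlinarith [ht3]
    rw [hvv, h23, h53, h13, gg]
    linear_combination (-(32:ℝ)/3*u^3) * ht3 + (-32:ℝ) * hu3
  rw [q1, ← key]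
  push_cast
  ring

end BA

/-- Let `a₁(τ) < b₁(τ)` denote the two real roots of `q₁` for
`τ ∈ (0, 1/4)`. Then `a₁` is strictly decreasing and `b₁` strictly increasing on `(0, 1/4)`;
moreover `a₁(τ) → 3^{2/3}/4` and `b₁(τ) → 3^{2/3}/4` as `τ → 0⁺`, while `a₁(τ) → −∞` and
`b₁(τ) → 3^{2/3}/2` as `τ → 1/4⁻`. -/
theorem real_branch_points_monotone (a₁ b₁ : ℝ → ℝ)
    (hroots : ∀ τ ∈ Set.Ioo (0 : ℝ) (1 / 4),
      a₁ τ < b₁ τ ∧ q1 τ ((a₁ τ : ℝ) : ℂ) = 0 ∧ q1 τ ((b₁ τ : ℝ) : ℂ) = 0 ∧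
        ∀ x : ℝ, q1 τ ((x : ℝ) : ℂ) = 0 → x = a₁ τ ∨ x = b₁ τ) :
    StrictAntiOn a₁ (Set.Ioo 0 (1 / 4)) ∧ StrictMonoOn b₁ (Set.Ioo 0 (1 / 4)) ∧
    Filter.Tendsto a₁ (nhdsWithin 0 (Set.Ioi 0)) (nhds ((3 : ℝ) ^ ((2 : ℝ) / 3) / 4)) ∧
    Filter.Tendsto b₁ (nhdsWithin 0 (Set.Ioi 0)) (nhds ((3 : ℝ) ^ ((2 : ℝ) / 3) / 4)) ∧
    Filter.Tendsto a₁ (nhdsWithin (1 / 4) (Set.Iio (1 / 4))) Filter.atBot ∧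
    Filter.Tendsto b₁ (nhdsWithin (1 / 4) (Set.Iio (1 / 4)))
      (nhds ((3 : ℝ) ^ ((2 : ℝ) / 3) / 2)) := by
  -- bridge: real roots of q1 are roots of gg
  have hbridge : ∀ τ ∈ Set.Ioo (0:ℝ) (1/4), ∀ x : ℝ,
      (q1 τ ((x:ℝ):ℂ) = 0 ↔ BA.gg (BA.vv τ) x = 0) := by
    intro τ hτ x
    rw [BA.q1_eq τ x (le_of_lt hτ.2), Complex.ofReal_eq_zero]
    constructor
    · intro h; linarith [h]
    · intro h; rw [h]; ring
  -- v decreasing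
  have hvlt : ∀ {τ τ' : ℝ}, τ ∈ Set.Ioo (0:ℝ) (1/4) → τ' ∈ Set.Ioo (0:ℝ) (1/4) →
      τ < τ' → BA.vv τ' < BA.vv τ := by
    intro τ τ' hτ hτ' hlt
    exact Real.rpow_lt_rpow (by nlinarith [hτ'.2]) (by nlinarith) (by norm_num)
  -- strict antitonicity of a₁
  have hanti : StrictAntiOn a₁ (Set.Ioo 0 (1/4)) := by
    intro τ hτ τ' hτ' hlt
    obtain ⟨hab, ha0, hb0, huniq⟩ := hroots τ hτ
    obtain ⟨hab', ha0', hb0', huniq'⟩ := hroots τ' hτ'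
    have hga : BA.gg (BA.vv τ) (a₁ τ) = 0 := (hbridge τ hτ _).mp ha0
    have hneg : BA.gg (BA.vv τ') (a₁ τ) < 0 :=
      BA.sign_lt (BA.vv_pos hτ'.2) (hvlt hτ hτ' hlt) hga
    obtain ⟨r, hr, hr0⟩ := BA.exists_root_lt (BA.vv_pos hτ'.2) hneg
    rcases huniq' r ((hbridge τ' hτ' r).mpr hr0) with h | h
    · rw [← h]; exact hr
    · calc a₁ τ' < b₁ τ' := hab'
        _ = r := h.symm
        _ < a₁ τ := hr
  -- strict monotonicity of b₁
  have hmono : StrictMonoOn b₁ (Set.Ioo 0 (1/4)) := by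
    intro τ hτ τ' hτ' hlt
    obtain ⟨hab, ha0, hb0, huniq⟩ := hroots τ hτ
    obtain ⟨hab', ha0', hb0', huniq'⟩ := hroots τ' hτ'
    have hgb : BA.gg (BA.vv τ) (b₁ τ) = 0 := (hbridge τ hτ _).mp hb0
    have hneg : BA.gg (BA.vv τ') (b₁ τ) < 0 :=
      BA.sign_lt (BA.vv_pos hτ'.2) (hvlt hτ hτ' hlt) hgb
    obtain ⟨r, hr, hr0⟩ := BA.exists_root_gt (BA.vv_pos hτ'.2) hneg
    rcases huniq' r ((hbridge τ' hτ' r).mpr hr0) with h | h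
    · calc b₁ τ < r := hr
        _ = a₁ τ' := h
        _ < b₁ τ' := hab'
    · rw [← h]; exact hr
  -- v tendsto at 0 and 1/4
  have hvt0 : Filter.Tendsto BA.vv (nhdsWithin 0 (Set.Ioi 0))
      (nhds ((3:ℝ)^((1:ℝ)/3))) := by
    have hc : ContinuousAt BA.vv 0 := by
      unfold BA.vv
      exact ContinuousAt.rpow_const (by fun_prop) (Or.inl (by norm_num))
    have hval : BA.vv 0 = (3:ℝ)^((1:ℝ)/3) := by rw [BA.vv]; norm_num
    have := hc.tendsto
    rw [hval] at this
    exact this.mono_left nhdsWithin_le_nhds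
  have hvt4 : Filter.Tendsto BA.vv (nhdsWithin (1/4) (Set.Iio (1/4)))
      (nhds 0) := by
    have hc : ContinuousAt BA.vv (1/4) := by
      unfold BA.vv
      exact ContinuousAt.rpow_const (by fun_prop) (Or.inr (by norm_num))
    have hval : BA.vv (1/4) = 0 := by
      have h0 : (3*(1 - 4*((1:ℝ)/4))) = 0 := by norm_num
      rw [BA.vv, h0]
      exact Real.zero_rpow (by norm_num)
    have := hc.tendsto
    rw [hval] at this
    exact this.mono_left nhdsWithin_le_nhds
  have hIooMem0 : Set.Ioo (0:ℝ) (1/4) ∈ nhdsWithin 0 (Set.Ioi 0) :=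
    Ioo_mem_nhdsGT_of_mem ⟨le_refl 0, by norm_num⟩
  have hIooMem4 : Set.Ioo (0:ℝ) (1/4) ∈ nhdsWithin (1/4) (Set.Iio (1/4)) :=
    Ioo_mem_nhdsLT_of_mem ⟨by norm_num, le_refl _⟩
  -- generic limit at 0
  have hlim0 : ∀ f : ℝ → ℝ, (∀ τ ∈ Set.Ioo (0:ℝ) (1/4), BA.gg (BA.vv τ) (f τ) = 0) →
      Filter.Tendsto f (nhdsWithin 0 (Set.Ioi 0)) (nhds ((3:ℝ)^((2:ℝ)/3)/4)) := by
    intro f hf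
    rw [Metric.tendsto_nhds]
    intro ε hε
    have hmax : max 1 ((3:ℝ)^((1:ℝ)/3) - ε^2/39) < (3:ℝ)^((1:ℝ)/3) :=
      max_lt BA.s_gt_one (by nlinarith)
    have E1 := hvt0.eventually_const_lt hmax
    filter_upwards [E1, hIooMem0] with τ hv1 hIoo
    have hvle : BA.vv τ ≤ (3:ℝ)^((1:ℝ)/3) := le_of_lt (BA.vv_lt_s hIoo.1 hIoo.2)
    have h1 : 1 ≤ BA.vv τ := ((le_max_left _ _).trans_lt hv1).le
    have hnb := BA.near_bound h1 hvle (hf τ hIoo)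
    have hsv : (3:ℝ)^((1:ℝ)/3) - BA.vv τ < ε^2/39 := by
      have := (le_max_right 1 ((3:ℝ)^((1:ℝ)/3) - ε^2/39)).trans_lt hv1
      linarith
    have hsq : (f τ - (3:ℝ)^((2:ℝ)/3)/4)^2 < ε^2 := by nlinarith [hnb, hsv]
    rw [Real.dist_eq, abs_lt]
    constructor <;> nlinarith [hsq, hε]
  have hfa : ∀ τ ∈ Set.Ioo (0:ℝ) (1/4), BA.gg (BA.vv τ) (a₁ τ) = 0 := by
    intro τ hτ
    exact (hbridge τ hτ _).mp (hroots τ hτ).2.1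
  have hfb : ∀ τ ∈ Set.Ioo (0:ℝ) (1/4), BA.gg (BA.vv τ) (b₁ τ) = 0 := by
    intro τ hτ
    exact (hbridge τ hτ _).mp (hroots τ hτ).2.2.1
  -- eventual negativity of gg (vv τ) p near τ = 1/4, for 8p³ < 9
  have hevneg : ∀ p : ℝ, 8*p^3 < 9 →
      ∀ᶠ τ in nhdsWithin (1/4) (Set.Iio (1/4)), BA.gg (BA.vv τ) p < 0 := by
    intro p hp9
    have hc : Continuous (fun v => BA.gg v p) := by unfold BA.gg; fun_prop
    have hgt : Filter.Tendsto (fun τ => BA.gg (BA.vv τ) p)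
        (nhdsWithin (1/4) (Set.Iio (1/4))) (nhds (BA.gg 0 p)) :=
      (hc.tendsto 0).comp hvt4
    have hneg : BA.gg 0 p < 0 := by simp only [BA.gg]; nlinarith
    exact hgt.eventually_lt_const hneg
  -- limit of a₁ at 1/4 : atBot
  have ha4 : Filter.Tendsto a₁ (nhdsWithin (1/4) (Set.Iio (1/4))) Filter.atBot := by
    rw [Filter.tendsto_atBot]
    intro M
    have hp0 : min M 0 ≤ 0 := min_le_right _ _
    have hp9 : 8*(min M 0)^3 < 9 := by
      have := Odd.pow_nonpos (⟨1, by norm_num⟩ : Odd 3) hp0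
      linarith
    filter_upwards [hevneg (min M 0) hp9, hIooMem4] with τ hgneg hIoo
    obtain ⟨hab, ha0, hb0, huniq⟩ := hroots τ hIoo
    obtain ⟨r, hr, hr0⟩ := BA.exists_root_lt (BA.vv_pos hIoo.2) hgneg
    have hrM : r ≤ M := by have := min_le_left M 0; linarith
    rcases huniq r ((hbridge τ hIoo r).mpr hr0) with h | h
    · rw [← h]; exact hrM
    · have : a₁ τ < r := h ▸ hab
      linarith [hrM]
  -- limit of b₁ at 1/4 : 3^{2/3}/2
  have hb4 : Filter.Tendsto b₁ (nhdsWithin (1/4) (Set.Iio (1/4)))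
      (nhds ((3:ℝ)^((2:ℝ)/3)/2)) := by
    rw [tendsto_order]
    constructor
    · intro p hp
      have hp9 : 8*p^3 < 9 := by
        rcases le_or_gt p 0 with h0 | h0
        · have := Odd.pow_nonpos (⟨1, by norm_num⟩ : Odd 3) h0; linarith
        · have := pow_lt_pow_left₀ hp (le_of_lt h0) (by norm_num : (3:ℕ) ≠ 0)
          nlinarith [BA.beta_cube]
      filter_upwards [hevneg p hp9, hIooMem4] with τ hgneg hIoo
      obtain ⟨hab, ha0, hb0, huniq⟩ := hroots τ hIoo
      obtain ⟨r, hr, hr0⟩ := BA.exists_root_gt (BA.vv_pos hIoo.2) hgneg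
      rcases huniq r ((hbridge τ hIoo r).mpr hr0) with h | h
      · have : p < a₁ τ := h ▸ hr
        linarith
      · exact h ▸ hr
    · intro p hp
      filter_upwards [hIooMem4] with τ hIoo
      have h9 := BA.roots_cube_lt (BA.vv_pos hIoo.2) (hfb τ hIoo)
      have hbβ : b₁ τ < (3:ℝ)^((2:ℝ)/3)/2 := by
        by_contra hc
        push_neg at hc
        have := pow_le_pow_left₀ (le_of_lt BA.beta_pos) hc 3
        linarith [BA.beta_cube]
      linarith
  exact ⟨hanti, hmono, hlim0 a₁ hfa, hlim0 b₁ hfb, ha4, hb4⟩
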